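/- arXiv:cs/0610122 — 2 statements merged into one kernel-verified Lean document; each statement's English description precedes it below -/
import Mathlib

section
/- Relative accuracy of the compensated Horner algorithm (relation (19)): Let u be a real number with 0 < u, let n be a positive integer with 2n·u < 1, and let P, P̃, r̂, c, ĉ, r̄ be real numbers with P̃ ≥ 0 and P ≠ 0. Suppose that P = r̂ + c, that |ĉ − c| ≤ γ_{2n−1}·γ_{2n}·P̃, and that r̄ = (r̂ + ĉ)·(1+ε) for some ε with |ε| ≤ u. Then |r̄ − P| / |P| ≤ u + γ_{2n}² · (P̃ / |P|). -/
/-!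
Rounding the final sum gives `r̄ - p = ε p + (1 + ε)(ĉ - c)`, so the relative error is at most
`u` plus `(1 + u) |ĉ - c| / |p|`. The factor `1 + u` is absorbed by the first gamma factor of the
bound on `|ĉ - c|`, since `(1 + u) γ_{k-1} ≤ γ_k`.
-/

noncomputable def gamma (k u : ℝ) : ℝ := k * u / (1 - k * u)

lemma gamma_nonneg {k u : ℝ} (hk : 0 ≤ k) (hu : 0 ≤ u) (hku : k * u < 1) : 0 ≤ gamma k u :=
  div_nonneg (mul_nonneg hk hu) (sub_nonneg.2 hku.le)

lemma one_add_mul_gamma_sub_one_le {k u : ℝ} (hk : 0 ≤ k) (hu : 0 ≤ u) (hku : k * u < 1) :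
    (1 + u) * gamma (k - 1) u ≤ gamma k u := by
  have hd : 0 < 1 - k * u := by linarith
  have hd' : 0 < 1 - (k - 1) * u := by nlinarith
  rw [gamma, gamma, ← mul_div_assoc, div_le_div_iff₀ hd' hd]
  -- the difference of the two sides is `u ((1 - k u)² + k u + u (1 - k u))`
  nlinarith [mul_nonneg hu (sq_nonneg (1 - k * u)), mul_nonneg hu (mul_nonneg hk hu),
    mul_nonneg hu (mul_nonneg hu hd.le)]

lemma abs_rounded_add_sub_le {P rhat c chat rbar ε u : ℝ} (hP : P = rhat + c)
    (hε : |ε| ≤ u) (hrbar : rbar = (rhat + chat) * (1 + ε)) :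
    |rbar - P| ≤ u * |P| + (1 + u) * |chat - c| := by
  have herr : rbar - P = ε * P + (1 + ε) * (chat - c) := by rw [hrbar, hP]; ring
  have hfactor : |1 + ε| ≤ 1 + u := (abs_add_le 1 ε).trans (by rw [abs_one]; linarith)
  calc |rbar - P| ≤ |ε| * |P| + |1 + ε| * |chat - c| := by
        rw [herr, ← abs_mul, ← abs_mul]; exact abs_add_le _ _
    _ ≤ u * |P| + (1 + u) * |chat - c| := by gcongr

theorem compensated_horner_relative_accuracy_general
    (u : ℝ) (hu : 0 < u) (n : ℕ) (h2nu : 2 * (n : ℝ) * u < 1)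
    (P Ptilde rhat c chat rbar ε : ℝ) (hPt : 0 ≤ Ptilde) (hP0 : P ≠ 0)
    (hP : P = rhat + c)
    (hc : |chat - c| ≤
      ((2 * (n : ℝ) - 1) * u / (1 - (2 * (n : ℝ) - 1) * u)) *
        (2 * (n : ℝ) * u / (1 - 2 * (n : ℝ) * u)) * Ptilde)
    (hε : |ε| ≤ u)
    (hrbar : rbar = (rhat + chat) * (1 + ε)) :
    |rbar - P| / |P| ≤ u +
      (2 * (n : ℝ) * u / (1 - 2 * (n : ℝ) * u)) ^ 2 * (Ptilde / |P|) := by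
  have hk : (0 : ℝ) ≤ 2 * n := by positivity
  have hγ : 0 ≤ gamma (2 * n) u := gamma_nonneg hk hu.le h2nu
  have hcorr : (1 + u) * |chat - c| ≤ gamma (2 * n) u ^ 2 * Ptilde :=
    calc (1 + u) * |chat - c| ≤ (1 + u) * (gamma (2 * n - 1) u * gamma (2 * n) u * Ptilde) := by
          gcongr; exact hc
      _ = ((1 + u) * gamma (2 * n - 1) u) * (gamma (2 * n) u * Ptilde) := by ring
      _ ≤ gamma (2 * n) u * (gamma (2 * n) u * Ptilde) := by
          gcongr; exact one_add_mul_gamma_sub_one_le hk hu.le h2nu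
      _ = gamma (2 * n) u ^ 2 * Ptilde := by ring
  have hPpos : 0 < |P| := abs_pos.2 hP0
  rw [div_le_iff₀ hPpos, add_mul, mul_assoc, div_mul_cancel₀ _ hPpos.ne']
  unfold gamma at hcorr
  linarith [abs_rounded_add_sub_le hP hε hrbar]

/-- Relative accuracy of the compensated Horner algorithm (relation (19)).
Here `γ_k = k·u/(1 − k·u)` and `P̃/|P|` is the condition number. -/
theorem compensated_horner_relative_accuracy
    (u : ℝ) (hu : 0 < u) (n : ℕ) (hn : 1 ≤ n) (h2nu : 2 * (n : ℝ) * u < 1)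
    (P Ptilde rhat c chat rbar ε : ℝ) (hPt : 0 ≤ Ptilde) (hP0 : P ≠ 0)
    (hP : P = rhat + c)
    (hc : |chat - c| ≤
      ((2 * (n : ℝ) - 1) * u / (1 - (2 * (n : ℝ) - 1) * u)) *
        (2 * (n : ℝ) * u / (1 - 2 * (n : ℝ) * u)) * Ptilde)
    (hε : |ε| ≤ u)
    (hrbar : rbar = (rhat + chat) * (1 + ε)) :
    |rbar - P| / |P| ≤ u +
      (2 * (n : ℝ) * u / (1 - 2 * (n : ℝ) * u)) ^ 2 * (Ptilde / |P|) :=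
  compensated_horner_relative_accuracy_general u hu n h2nu P Ptilde rhat c chat rbar ε hPt hP0 hP hc
    hε hrbar
end

section
/- Dynamic validated bound for the correcting term (Lemma 4): Let u be a real number with 0 < u, let n be a positive integer with 2(n+1)·u < 1, and let x, π_0, …, π_{n−1}, σ_0, …, σ_{n−1} be real numbers; set c = Σ_{i=0}^{n−1} (π_i + σ_i) x^i. Suppose: (1) w_i = (π_i + σ_i)·(1+μ_i) with |μ_i| ≤ u, ĉ_{n−1} = w_{n−1} and, for i = n−2, …, 0, ĉ_i = (ĉ_{i+1}·x·(1+φ_i) + w_i)·(1+ψ_i) with |φ_i|, |ψ_i| ≤ u, and ĉ = ĉ_0; (2) v_i = (|π_i| + |σ_i|)/(1+μ'_i) with |μ'_i| ≤ u, b_{n−1} = v_{n−1} and, for i = n−2, …, 0, b_i = ( b_{i+1}·|x|/(1+φ'_i) + v_i ) / (1+ψ'_i) with |φ'_i|, |ψ'_i| ≤ u, and b̂ = b_0; (3) ĝ = γ_{2n−1}/(1+ε_0), t = ĝ·b̂/(1+ε_1), and α̂ = ( t/(1 − 2(n+1)·u) ) / (1+ε_2), with |ε_0|, |ε_1|, |ε_2|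 ≤ u. Then |c − ĉ| ≤ α̂. -/
/-!
Let `c_k = Σ_{i < n-k} (π_{k+i} + σ_{k+i}) x^i` be the exact Horner iterates (`hornerTail`) and
`s_k` the iterates of the coefficients `|π_i| + |σ_i|` at `|x|`. With `E_k = (1+u)^(2(n-1-k)+1)`,
a downward induction on `k` gives `|ĉ_k - c_k| ≤ (E_k - 1) s_k`, because each Horner step
contributes two rounding factors and relative error bounds compose as
`(E - 1) s, F - 1 ↦ (E F - 1) s`; and `s_k ≤ E_k b_k`, because each division by `1 + ε`
undershoots by at most a factor `1 + u`. At `k = 0` both `E_0 - 1 ≤ γ_{2n-1}` and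
`E_0 (1+u)^3 (1 - 2(n+1)u) ≤ 1` follow from `(1+u)^m (1 - m u) ≤ 1`, i.e. from `1 + t ≤ eᵗ`,
and the three roundings in `α̂` lose at most the factor `(1+u)^3`.
-/

open Finset

section Horner

variable {R : Type*} [CommSemiring R]

def hornerTail (a : ℕ → R) (x : R) (n k : ℕ) : R :=
  ∑ i ∈ range (n - k), a (k + i) * x ^ i

theorem hornerTail_of_lt (a : ℕ → R) (x : R) {n k : ℕ} (hk : k < n) :
    hornerTail a x n k = hornerTail a x n (k + 1) * x + a k := by
  rw [hornerTail, hornerTail, show n - k = n - (k + 1) + 1 by omega, sum_range_succ',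
    sum_mul]
  simp only [add_zero, pow_zero, mul_one, pow_succ, ← mul_assoc, ← add_assoc]
  grind

theorem hornerTail_of_add_one_eq (a : ℕ → R) (x : R) {n k : ℕ} (hk : k + 1 = n) :
    hornerTail a x n k = a k := by
  subst hk; simp [hornerTail]

theorem hornerTail_zero (a : ℕ → R) (x : R) (n : ℕ) :
    hornerTail a x n 0 = ∑ i ∈ range n, a i * x ^ i := by
  simp [hornerTail]

end Horner

theorem abs_hornerTail_le {a A : ℕ → ℝ} {n : ℕ} (x : ℝ) (k : ℕ)
    (haA : ∀ i < n, |a i| ≤ A i) :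
    |hornerTail a x n k| ≤ hornerTail A |x| n k := by
  refine (abs_sum_le_sum_abs _ _).trans (sum_le_sum fun i hi => ?_)
  rw [abs_mul, abs_pow]
  gcongr
  exact haA _ (by simp at hi; omega)

theorem one_add_pos_of_abs_le {ε u : ℝ} (hε : |ε| ≤ u) (hu : u < 1) : 0 < 1 + ε := by
  linarith [neg_abs_le ε]

theorem div_one_add_le_div_one_add {y ε u : ℝ} (hy : 0 ≤ y) (hε : |ε| ≤ u) (hu : u < 1) :
    y / (1 + u) ≤ y / (1 + ε) :=
  div_le_div_of_nonneg_left hy (one_add_pos_of_abs_le hε hu) (by linarith [le_abs_self ε])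

theorem abs_one_add_mul_one_add_sub_one_le {ε δ u : ℝ} (hε : |ε| ≤ u) (hδ : |δ| ≤ u) :
    |(1 + ε) * (1 + δ) - 1| ≤ (1 + u) ^ 2 - 1 := by
  have : |ε * δ| ≤ u * u := by
    rw [abs_mul]; exact mul_le_mul hε hδ (abs_nonneg _) ((abs_nonneg _).trans hε)
  calc |(1 + ε) * (1 + δ) - 1| = |ε + δ + ε * δ| := by ring_nf
    _ ≤ |ε| + |δ| + |ε * δ| := abs_add_three _ _ _
    _ ≤ (1 + u) ^ 2 - 1 := by nlinarith

theorem abs_mul_sub_le_of_abs_sub_le {c ĉ s θ E F : ℝ} (hc : |c| ≤ s)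
    (herr : |ĉ - c| ≤ (E - 1) * s) (hθ : |θ - 1| ≤ F - 1) : |ĉ * θ - c| ≤ (E * F - 1) * s := by
  have hθF : |θ| ≤ F := by linarith [abs_sub_abs_le_abs_sub θ 1, abs_one (α := ℝ)]
  calc |ĉ * θ - c| = |(ĉ - c) * θ + c * (θ - 1)| := by ring_nf
    _ ≤ |ĉ - c| * |θ| + |c| * |θ - 1| := by rw [← abs_mul, ← abs_mul]; exact abs_add_le _ _
    _ ≤ (E - 1) * s * F + s * (F - 1) := by
        gcongr
        · exact (abs_nonneg _).trans herr
        · exact (abs_nonneg _).trans hc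
    _ = (E * F - 1) * s := by ring

theorem one_add_pow_mul_one_sub_le {u : ℝ} (hu : -1 ≤ u) (m : ℕ) :
    (1 + u) ^ m * (1 - m * u) ≤ 1 := by
  rcases le_or_gt 0 (1 - m * u) with h | h
  · calc (1 + u) ^ m * (1 - m * u) ≤ Real.exp u ^ m * Real.exp (-(m * u)) := by
          gcongr
          · linarith
          · linarith [Real.add_one_le_exp u]
          · linarith [Real.add_one_le_exp (-(m * u))]
      _ = 1 := by rw [← Real.exp_nat_mul, ← Real.exp_add]; simp
  · nlinarith [pow_nonneg (by linarith : (0:ℝ) ≤ 1 + u) m]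

theorem one_add_pow_sub_one_le {u : ℝ} (hu : -1 ≤ u) {m : ℕ} (hm : m * u < 1) :
    (1 + u) ^ m - 1 ≤ m * u / (1 - m * u) := by
  rw [le_div_iff₀ (by linarith)]
  linarith [one_add_pow_mul_one_sub_le hu m]

theorem abs_horner_step_sub_le {c ĉ s a A x φ ψ μ u E : ℝ} (hE : 1 ≤ E)
    (hc : |c| ≤ s) (herr : |ĉ - c| ≤ (E - 1) * s) (ha : |a| ≤ A)
    (hφ : |φ| ≤ u) (hψ : |ψ| ≤ u) (hμ : |μ| ≤ u) :
    |(ĉ * x * (1 + φ) + a * (1 + μ)) * (1 + ψ) - (c * x + a)|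
      ≤ (E * (1 + u) ^ 2 - 1) * (s * |x| + A) := by
  have hcx : |ĉ * x * ((1 + φ) * (1 + ψ)) - c * x| ≤ (E * (1 + u) ^ 2 - 1) * (s * |x|) := by
    refine abs_mul_sub_le_of_abs_sub_le (by rw [abs_mul]; gcongr) ?_
      (abs_one_add_mul_one_add_sub_one_le hφ hψ)
    rw [← sub_mul, abs_mul, ← mul_assoc]; gcongr
  have ha' : |a * ((1 + μ) * (1 + ψ)) - a| ≤ (1 * (1 + u) ^ 2 - 1) * A :=
    abs_mul_sub_le_of_abs_sub_le ha (by simp) (abs_one_add_mul_one_add_sub_one_le hμ hψ)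
  have hA : ((1 + u) ^ 2 - 1) * A ≤ (E * (1 + u) ^ 2 - 1) * A := by
    gcongr
    · exact (abs_nonneg _).trans ha
    · exact le_mul_of_one_le_left (sq_nonneg _) hE
  calc _ = |(ĉ * x * ((1 + φ) * (1 + ψ)) - c * x) + (a * ((1 + μ) * (1 + ψ)) - a)| := by
        ring_nf
    _ ≤ _ := abs_add_le _ _
    _ ≤ _ := by rw [one_mul] at ha'; linarith

theorem horner_div_step_lower_bound {b y A φ ψ μ u : ℝ} (hb : 0 ≤ b) (hy : 0 ≤ y)
    (hA : 0 ≤ A) (hφ : |φ| ≤ u) (hψ : |ψ| ≤ u) (hμ : |μ| ≤ u) (hu : u < 1) :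
    (b * y + A) / (1 + u) ^ 2 ≤ (b * y / (1 + φ) + A / (1 + μ)) / (1 + ψ) := by
  have hu0 : 0 ≤ u := (abs_nonneg _).trans hφ
  calc (b * y + A) / (1 + u) ^ 2 = (b * y / (1 + u) + A / (1 + u)) / (1 + u) := by
        field_simp
    _ ≤ (b * y / (1 + u) + A / (1 + u)) / (1 + ψ) :=
        div_one_add_le_div_one_add (by positivity) hψ hu
    _ ≤ _ := by
        have := one_add_pos_of_abs_le hψ hu
        gcongr (?_ + ?_) / _
        · exact div_one_add_le_div_one_add (by positivity) hφ hu
        · exact div_one_add_le_div_one_add hA hμ hu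

theorem abs_horner_sub_hornerTail_le {a A w ĉ μ φ ψ : ℕ → ℝ} {x u : ℝ} {n : ℕ}
    (hu : 0 ≤ u) (haA : ∀ i < n, |a i| ≤ A i)
    (hμ : ∀ i < n, |μ i| ≤ u) (hw : ∀ i < n, w i = a i * (1 + μ i))
    (hcn : ĉ (n - 1) = w (n - 1))
    (hφ : ∀ i < n - 1, |φ i| ≤ u) (hψ : ∀ i < n - 1, |ψ i| ≤ u)
    (hrec : ∀ i < n - 1, ĉ i = (ĉ (i + 1) * x * (1 + φ i) + w i) * (1 + ψ i)) (m : ℕ) :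
    ∀ k, k + m + 1 = n →
      |ĉ k - hornerTail a x n k| ≤ ((1 + u) ^ (2 * m + 1) - 1) * hornerTail A |x| n k := by
  induction m with
  | zero =>
    intro k hk
    obtain rfl : k = n - 1 := by omega
    rw [hcn, hw _ (by omega), hornerTail_of_add_one_eq _ _ (by omega),
      hornerTail_of_add_one_eq _ _ (by omega)]
    simpa using abs_mul_sub_le_of_abs_sub_le (E := 1) (haA _ (by omega)) (by simp)
      (show |1 + μ (n - 1) - 1| ≤ 1 + u - 1 by simpa using hμ _ (by omega))
  | succ m ih =>
    intro k hk
    rw [hrec k (by omega), hw k (by omega), hornerTail_of_lt _ _ (by omega : k < n),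
      hornerTail_of_lt _ _ (by omega : k < n), show 2 * (m + 1) + 1 = 2 * m + 1 + 2 by ring,
      pow_add]
    exact abs_horner_step_sub_le (one_le_pow₀ (by linarith)) (abs_hornerTail_le _ _ haA)
      (ih (k + 1) (by omega)) (haA k (by omega)) (hφ k (by omega)) (hψ k (by omega))
      (hμ k (by omega))

theorem hornerTail_le_mul_horner_div {A v b μ φ ψ : ℕ → ℝ} {y u : ℝ} {n : ℕ}
    (hu0 : 0 ≤ u) (hu1 : u < 1) (hy : 0 ≤ y) (hA : ∀ i < n, 0 ≤ A i)
    (hμ : ∀ i < n, |μ i| ≤ u) (hv : ∀ i < n, v i = A i / (1 + μ i))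
    (hbn : b (n - 1) = v (n - 1))
    (hφ : ∀ i < n - 1, |φ i| ≤ u) (hψ : ∀ i < n - 1, |ψ i| ≤ u)
    (hrec : ∀ i < n - 1, b i = (b (i + 1) * y / (1 + φ i) + v i) / (1 + ψ i)) (m : ℕ) :
    ∀ k, k + m + 1 = n → 0 ≤ b k ∧ hornerTail A y n k ≤ (1 + u) ^ (2 * m + 1) * b k := by
  induction m with
  | zero =>
    intro k hk
    obtain rfl : k = n - 1 := by omega
    have hAk := hA _ (by omega : n - 1 < n)
    have hb : A (n - 1) / (1 + u) ≤ b (n - 1) := by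
      rw [hbn, hv _ (by omega)]; exact div_one_add_le_div_one_add hAk (hμ _ (by omega)) hu1
    rw [hornerTail_of_add_one_eq _ _ (by omega), mul_zero, zero_add, pow_one]
    exact ⟨(div_nonneg hAk (by linarith)).trans hb, (div_le_iff₀' (by linarith)).mp hb⟩
  | succ m ih =>
    intro k hk
    obtain ⟨hb', hs'⟩ := ih (k + 1) (by omega)
    have hAk := hA k (by omega)
    have hb : (b (k + 1) * y + A k) / (1 + u) ^ 2 ≤ b k := by
      rw [hrec k (by omega), hv k (by omega)]
      exact horner_div_step_lower_bound hb' hy hAk (hφ k (by omega)) (hψ k (by omega))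
        (hμ k (by omega)) hu1
    have hE : 1 ≤ (1 + u) ^ (2 * m + 1) := one_le_pow₀ (by linarith)
    refine ⟨(div_nonneg (by positivity) (by positivity)).trans hb, ?_⟩
    rw [hornerTail_of_lt _ _ (by omega : k < n)]
    calc hornerTail A y n (k + 1) * y + A k ≤ (1 + u) ^ (2 * m + 1) * b (k + 1) * y + A k := by
          gcongr
      _ ≤ (1 + u) ^ (2 * m + 1) * (b (k + 1) * y + A k) := by nlinarith
      _ ≤ (1 + u) ^ (2 * m + 1) * ((1 + u) ^ 2 * b k) := by
          gcongr; exact (div_le_iff₀' (by positivity)).mp hb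
      _ = (1 + u) ^ (2 * (m + 1) + 1) * b k := by ring

theorem mul_div_le_rounded_bound {γ b D ĝ t α ε₀ ε₁ ε₂ u : ℝ} (hγ : 0 ≤ γ) (hb : 0 ≤ b)
    (hD : 0 < 1 - D) (hu0 : 0 ≤ u) (hu1 : u < 1)
    (hε₀ : |ε₀| ≤ u) (hε₁ : |ε₁| ≤ u) (hε₂ : |ε₂| ≤ u)
    (hg : ĝ = γ / (1 + ε₀)) (ht : t = ĝ * b / (1 + ε₁))
    (hα : α = t / (1 - D) / (1 + ε₂)) :
    γ * b / ((1 + u) ^ 3 * (1 - D)) ≤ α := by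
  have hĝ : γ / (1 + u) ≤ ĝ := hg ▸ div_one_add_le_div_one_add hγ hε₀ hu1
  have ht' : γ / (1 + u) * b / (1 + u) ≤ t := by
    have hĝ0 : 0 ≤ ĝ := (by positivity : 0 ≤ γ / (1 + u)).trans hĝ
    calc _ ≤ ĝ * b / (1 + u) := by gcongr
      _ ≤ t := ht ▸ div_one_add_le_div_one_add (by positivity) hε₁ hu1
  have ht0 : 0 ≤ t := (by positivity : 0 ≤ γ / (1 + u) * b / (1 + u)).trans ht'
  calc γ * b / ((1 + u) ^ 3 * (1 - D)) = γ / (1 + u) * b / (1 + u) / (1 - D) / (1 + u) := by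
        field_simp
    _ ≤ t / (1 - D) / (1 + u) := by gcongr
    _ ≤ α := hα ▸ div_one_add_le_div_one_add (div_nonneg ht0 hD.le) hε₂ hu1

/-- Dynamic validated bound for the correcting term (Lemma 4). Here
`c = Σ_{i<n} (π_i + σ_i) x^i` is the exact error term of the error free Horner
transformation, `ĉ = chat 0` its computed value, `b̂ = b 0` the computed Horner
value of the absolute-value error polynomials at `|x|`, `ĝ` the floating point
evaluation of `γ_{2n−1} = (2n−1)·u/(1 − (2n−1)·u)`, and `α̂` the computed
validated error bound. -/
theorem dynamic_bound_correcting_term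
    (u : ℝ) (hu : 0 < u) (n : ℕ) (hn : 1 ≤ n)
    (hnu : 2 * ((n : ℝ) + 1) * u < 1)
    (x : ℝ) (π σ w chat μ φ ψ v b μ' φ' ψ' : ℕ → ℝ)
    (ghat t αhat ε₀ ε₁ ε₂ : ℝ)
    -- (1) computed correcting term
    (hμu : ∀ i < n, |μ i| ≤ u)
    (hw : ∀ i < n, w i = (π i + σ i) * (1 + μ i))
    (hcn : chat (n - 1) = w (n - 1))
    (hφu : ∀ i < n - 1, |φ i| ≤ u) (hψu : ∀ i < n - 1, |ψ i| ≤ u)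
    (hcrec : ∀ i < n - 1,
      chat i = (chat (i + 1) * x * (1 + φ i) + w i) * (1 + ψ i))
    -- (2) computed Horner value of the absolute-value error polynomials
    (hμ'u : ∀ i < n, |μ' i| ≤ u)
    (hv : ∀ i < n, v i = (|π i| + |σ i|) / (1 + μ' i))
    (hbn : b (n - 1) = v (n - 1))
    (hφ'u : ∀ i < n - 1, |φ' i| ≤ u) (hψ'u : ∀ i < n - 1, |ψ' i| ≤ u)
    (hbrec : ∀ i < n - 1,
      b i = (b (i + 1) * |x| / (1 + φ' i) + v i) / (1 + ψ' i))
    -- (3) computed validated error bound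
    (hε₀ : |ε₀| ≤ u) (hε₁ : |ε₁| ≤ u) (hε₂ : |ε₂| ≤ u)
    (hg : ghat = ((2 * (n : ℝ) - 1) * u / (1 - (2 * (n : ℝ) - 1) * u)) / (1 + ε₀))
    (ht : t = ghat * b 0 / (1 + ε₁))
    (hα : αhat = (t / (1 - 2 * ((n : ℝ) + 1) * u)) / (1 + ε₂)) :
    |(∑ i ∈ Finset.range n, (π i + σ i) * x ^ i) - chat 0| ≤ αhat := by
  have hn1 : (1 : ℝ) ≤ n := by exact_mod_cast hn
  have hu1 : u < 1 := by nlinarith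
  have herr := abs_horner_sub_hornerTail_le hu.le (fun i _ => abs_add_le (π i) (σ i)) hμu hw hcn
    hφu hψu hcrec (n - 1) 0 (by omega)
  obtain ⟨hb, hs⟩ := hornerTail_le_mul_horner_div hu.le hu1 (abs_nonneg x)
    (fun i _ => by positivity) hμ'u hv hbn hφ'u hψ'u hbrec (n - 1) 0 (by omega)
  simp only [hornerTail_zero] at herr hs
  have hN : ((2 * (n - 1) + 1 : ℕ) : ℝ) = 2 * n - 1 := by push_cast [Nat.cast_sub hn]; ring
  have hγ := one_add_pow_sub_one_le (u := u) (m := 2 * (n - 1) + 1) (by linarith)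
    (by rw [hN]; nlinarith)
  have hP := one_add_pow_mul_one_sub_le (u := u) (by linarith) (2 * (n - 1) + 1 + 3)
  rw [hN] at hγ
  rw [pow_add, mul_assoc,
    show ((2 * (n - 1) + 1 + 3 : ℕ) : ℝ) = 2 * (n + 1) by push_cast [hN]; ring] at hP
  set P := (1 + u) ^ (2 * (n - 1) + 1)
  set γ := (2 * (n : ℝ) - 1) * u / (1 - (2 * (n : ℝ) - 1) * u)
  set K := (1 + u) ^ 3 * (1 - 2 * ((n : ℝ) + 1) * u)
  have hP1 : 1 ≤ P := one_le_pow₀ (by linarith)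
  have hγ0 : 0 ≤ γ := (sub_nonneg.2 hP1).trans hγ
  have hK : 0 < 1 - 2 * ((n : ℝ) + 1) * u := by linarith
  rw [abs_sub_comm]
  calc _ ≤ (P - 1) * ∑ i ∈ range n, (|π i| + |σ i|) * |x| ^ i := herr
    _ ≤ γ * (P * b 0) := by gcongr
    _ ≤ γ * b 0 / K := by
      rw [le_div_iff₀ (by positivity)]
      calc γ * (P * b 0) * K = γ * b 0 * (P * K) := by ring
        _ ≤ γ * b 0 := mul_le_of_le_one_right (mul_nonneg hγ0 hb) hP
    _ ≤ αhat := mul_div_le_rounded_bound hγ0 hb hK hu.le hu1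
        hε₀ hε₁ hε₂ hg ht hα
end
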